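/- arXiv:0809.2970 — 2 statements merged into one kernel-verified Lean document; each statement's English description precedes it below -/
import Mathlib

section
/- Let G_T be the complete directed graph on the vertex set T in which the length of the edge (u,v) is min_{1≤i≤k} δ_i(u,v), and let δ_{G_T} denote its distance function. Then for all u,v ∈ T, δ_G(u,v) = δ_{G_T}(u,v). -/
/-- A directed graph on vertex type `V` with integer edge lengths. -/
structure Digraph' (V : Type) where
  Adj : V → V → Prop
  len : V → V → ℤ

namespace Digraph'

variable {V : Type}

/-- Directed walks in `G` from `u` to `v`. -/
inductive Walk (G : Digraph' V) : V → V → Type where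
  | nil {u : V} : Walk G u u
  | cons {u v w : V} (h : G.Adj u v) (p : Walk G v w) : Walk G u w

/-- The total length (weight) of a walk: the sum of the lengths of its edges. -/
def Walk.weight {G : Digraph' V} : {u v : V} → G.Walk u v → ℤ
  | _, _, .nil => 0
  | u, _, .cons (v := x) _ p => G.len u x + Walk.weight p

/-- The list of vertices visited by a walk. -/
def Walk.support {G : Digraph' V} : {u v : V} → G.Walk u v → List V
  | u, _, .nil => [u]
  | u, _, .cons _ p => u :: Walk.support p

/-- The number of edges of a walk. -/
def Walk.edgeCount {G : Digraph' V} : {u v : V} → G.Walk u v → ℕ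
  | _, _, .nil => 0
  | _, _, .cons _ p => Walk.edgeCount p + 1

/-- The distance from `u` to `v`: the infimum of the total lengths of directed walks
from `u` to `v` (`⊤` if there is no such walk). -/
noncomputable def dist (G : Digraph' V) (u v : V) : EReal :=
  ⨅ p : G.Walk u v, ((Walk.weight p : ℝ) : EReal)

/-- The subgraph of `G` induced by a set `S` of vertices. -/
def induce (G : Digraph' V) (S : Set V) : Digraph' V where
  Adj a b := G.Adj a b ∧ a ∈ S ∧ b ∈ S
  len := G.len

end Digraph'

namespace Digraph'

variable {V : Type}

/-- Concatenation of walks. -/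
def Walk.append {G : Digraph' V} : {a b c : V} → G.Walk a b → G.Walk b c → G.Walk a c
  | _, _, _, .nil, q => q
  | _, _, _, .cons h p, q => .cons h (Walk.append p q)

lemma Walk.weight_append {G : Digraph' V} : ∀ {a b c : V} (p : G.Walk a b) (q : G.Walk b c),
    (p.append q).weight = p.weight + q.weight
  | _, _, _, .nil, q => by simp [Walk.append, Walk.weight]
  | _, _, _, .cons h p, q => by
      simp [Walk.append, Walk.weight, Walk.weight_append p q]; ring

lemma dist_le_weight {G : Digraph' V} {a b : V} (p : G.Walk a b) :
    G.dist a b ≤ ((p.weight : ℝ) : EReal) := iInf_le _ p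

lemma extract_lt {G : Digraph' V} {a b : V} {m : ℤ}
    (h : G.dist a b < ((m : ℝ) : EReal)) : ∃ p : G.Walk a b, p.weight < m := by
  obtain ⟨p, hp⟩ := iInf_lt_iff.mp h
  exact ⟨p, by exact_mod_cast hp⟩

lemma extract_le {G : Digraph' V} {a b : V} {m : ℤ}
    (h : G.dist a b ≤ ((m : ℝ) : EReal)) : ∃ p : G.Walk a b, p.weight ≤ m := by
  have h2 : G.dist a b < (((m + 1 : ℤ) : ℝ) : EReal) :=
    h.trans_lt (by exact_mod_cast (by omega : m < m + 1))
  obtain ⟨p, hp⟩ := extract_lt h2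
  exact ⟨p, by omega⟩

lemma induce_walk {G : Digraph' V} {S : Set V} : ∀ {a b : V} (p : (G.induce S).Walk a b),
    ∃ q : G.Walk a b, q.weight = p.weight
  | _, _, .nil => ⟨.nil, rfl⟩
  | _, _, .cons h p => by
      obtain ⟨q, hq⟩ := induce_walk p
      exact ⟨.cons h.1 q, by simp [Walk.weight, induce, hq]⟩

/-- Decomposition of a walk starting outside `T` into an initial segment inside a single
`Vs i` ending at the first vertex of `T`, followed by the rest of the walk. -/
lemma segment {k : ℕ} {Vs : Fin k → Set V} {T : Set V} {G : Digraph' V}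
    (hdelta : ∀ i j : Fin k, i ≠ j → Vs i ∩ Vs j = T)
    (hedge : ∀ u v : V, G.Adj u v → ∃ i, u ∈ Vs i ∧ v ∈ Vs i)
    :
    ∀ {x z : V} (p : G.Walk x z), z ∈ T → ∀ (i : Fin k), x ∈ Vs i → x ∉ T →
      ∃ c, c ∈ T ∧ ∃ (q : (G.induce (Vs i)).Walk x c) (p₂ : G.Walk c z),
        q.weight + p₂.weight = p.weight ∧ p₂.edgeCount < p.edgeCount := by
  intro x z p
  induction p with
  | nil => intro hz i _ hxT; exact absurd hz hxT
  | @cons x y z' h q ih =>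
    intro hz i hx hxT
    obtain ⟨j, hxj, hyj⟩ := hedge _ _ h
    have hy : y ∈ Vs i := by
      rcases eq_or_ne j i with rfl | hne
      · exact hyj
      · exact absurd (hdelta j i hne ▸ ⟨hxj, hx⟩) hxT
    by_cases hyT : y ∈ T
    · refine ⟨y, hyT, .cons ⟨h, hx, hy⟩ .nil, q, ?_, Nat.lt_succ_self _⟩
      simp [Walk.weight, induce]
    · obtain ⟨c, hc, q', p₂, hw, hcnt⟩ := ih hz i hy hyT
      refine ⟨c, hc, .cons ⟨h, hx, hy⟩ q', p₂, ?_, ?_⟩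
      · simp only [Walk.weight, induce] at hw ⊢; omega
      · simp only [Walk.edgeCount]; omega

end Digraph'

/-- Let `G_T` be the complete directed graph on the vertex set `T` in which
the length of the edge `(u,v)` is `min_{1 ≤ i ≤ k} δ_i(u,v)` (edges of infinite length being
omitted). Then for all `u, v ∈ T`, `δ_G(u,v) = δ_{G_T}(u,v)`. -/
theorem stmt1 {V : Type} [Fintype V] (G : Digraph' V)
    (hnoneg : ∀ (x : V) (p : G.Walk x x), 0 ≤ p.weight)
    (k : ℕ) (hk : 2 ≤ k) (Vs : Fin k → Set V)
    (hcover : (⋃ i, Vs i) = Set.univ)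
    (T : Set V) (hdelta : ∀ i j : Fin k, i ≠ j → Vs i ∩ Vs j = T)
    (hedge : ∀ u v : V, G.Adj u v → ∃ i, u ∈ Vs i ∧ v ∈ Vs i)
    (G_T : Digraph' V)
    (hadj : ∀ u v : V, G_T.Adj u v ↔
      u ∈ T ∧ v ∈ T ∧ (⨅ i, (G.induce (Vs i)).dist u v) ≠ ⊤)
    (hlen : ∀ u v : V, G_T.Adj u v →
      ((G_T.len u v : ℝ) : EReal) = ⨅ i, (G.induce (Vs i)).dist u v)
    (u v : V) (hu : u ∈ T) (hv : v ∈ T) :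
    G.dist u v = G_T.dist u v := by
  classical
  -- Hard direction: every walk in G from a vertex of T to v gives an upper bound for G_T.dist.
  have hard : ∀ (n : ℕ) (a : V), a ∈ T → ∀ p : G.Walk a v, p.edgeCount ≤ n →
      G_T.dist a v ≤ ((p.weight : ℝ) : EReal) := by
    intro n
    induction n with
    | zero =>
      intro a ha p hp
      cases p with
      | nil =>
        refine le_trans (Digraph'.dist_le_weight Digraph'.Walk.nil) ?_
        simp [Digraph'.Walk.weight]
      | cons h q => simp [Digraph'.Walk.edgeCount] at hp
    | succ n ih =>
      intro a ha p hp
      cases p with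
      | nil =>
        refine le_trans (Digraph'.dist_le_weight Digraph'.Walk.nil) ?_
        simp [Digraph'.Walk.weight]
      | @cons _ x _ h q =>
        obtain ⟨j, haj, hxj⟩ := hedge _ _ h
        have key : ∃ c, c ∈ T ∧ ∃ (iq : (G.induce (Vs j)).Walk a c) (p₂ : G.Walk c v),
            iq.weight + p₂.weight = (Digraph'.Walk.cons h q).weight ∧ p₂.edgeCount ≤ n := by
          by_cases hxT : x ∈ T
          · refine ⟨x, hxT, .cons ⟨h, haj, hxj⟩ .nil, q, ?_, ?_⟩
            · simp [Digraph'.Walk.weight, Digraph'.induce]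
            · simp only [Digraph'.Walk.edgeCount] at hp; omega
          · obtain ⟨c, hc, q', p₂, hw, hcnt⟩ :=
              Digraph'.segment hdelta hedge q hv j hxj hxT
            refine ⟨c, hc, .cons ⟨h, haj, hxj⟩ q', p₂, ?_, ?_⟩
            · simp only [Digraph'.Walk.weight, Digraph'.induce] at hw ⊢; omega
            · simp only [Digraph'.Walk.edgeCount] at hp ⊢; omega
        obtain ⟨c, hc, iq, p₂, hw, hcnt⟩ := key
        have hinf : (⨅ i, (G.induce (Vs i)).dist a c) ≤ ((iq.weight : ℝ) : EReal) :=
          (iInf_le _ j).trans (Digraph'.dist_le_weight iq)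
        have hne : (⨅ i, (G.induce (Vs i)).dist a c) ≠ ⊤ := by
          intro hT
          rw [hT, top_le_iff] at hinf
          exact (EReal.coe_ne_top _) hinf
        have hAdj : G_T.Adj a c := (hadj a c).mpr ⟨ha, hc, hne⟩
        have hlenle : G_T.len a c ≤ iq.weight := by
          have h2 : ((G_T.len a c : ℝ) : EReal) ≤ ((iq.weight : ℝ) : EReal) :=
            (hlen a c hAdj) ▸ hinf
          exact_mod_cast h2
        obtain ⟨w, hwle⟩ := Digraph'.extract_le (ih c hc p₂ hcnt)
        refine (Digraph'.dist_le_weight (Digraph'.Walk.cons hAdj w)).trans ?_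
        have hfin : (Digraph'.Walk.cons hAdj w).weight ≤ (Digraph'.Walk.cons h q).weight := by
          simp only [Digraph'.Walk.weight] at hw ⊢; omega
        exact_mod_cast hfin
  -- Easy direction: every walk in G_T gives an upper bound for G.dist.
  have easy : ∀ (b a : V) (w : G_T.Walk a b), G.dist a b ≤ ((w.weight : ℝ) : EReal) := by
    intro b a w
    induction w with
    | nil =>
      refine le_trans (Digraph'.dist_le_weight Digraph'.Walk.nil) ?_
      simp [Digraph'.Walk.weight]
    | @cons a x _ hA w ih =>
      obtain ⟨r, hr⟩ := Digraph'.extract_le ih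
      have hlt : (⨅ i, (G.induce (Vs i)).dist a x) < (((G_T.len a x + 1 : ℤ) : ℝ) : EReal) := by
        rw [← hlen a x hA]
        exact_mod_cast (by omega : G_T.len a x < G_T.len a x + 1)
      obtain ⟨i, hi⟩ := iInf_lt_iff.mp hlt
      obtain ⟨s, hs⟩ := Digraph'.extract_lt hi
      obtain ⟨s', hs'⟩ := Digraph'.induce_walk s
      refine (Digraph'.dist_le_weight (s'.append r)).trans ?_
      have : (s'.append r).weight ≤ (Digraph'.Walk.cons hA w).weight := by
        rw [Digraph'.Walk.weight_append]
        simp only [Digraph'.Walk.weight]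
        omega
      exact_mod_cast this
  refine le_antisymm ?_ ?_
  · rw [show G_T.dist u v = ⨅ w : G_T.Walk u v, ((w.weight : ℝ) : EReal) from rfl]
    exact le_iInf fun w => easy v u w
  · rw [show G.dist u v = ⨅ p : G.Walk u v, ((p.weight : ℝ) : EReal) from rfl]
    exact le_iInf fun p => hard p.edgeCount u hu p le_rfl
end

section
/- Let f : ℕ → ℝ≥0 be nondecreasing and let 𝓕 be a family of finite graphs closed under subgraphs such that every graph in 𝓕 with m vertices, under every weighting of its vertices by nonnegative reals, has a separation (A,B) with |A ∩ B| ≤ f(m) and each of w(A∖B), w(B∖A) at most (2/3) of the total weight. Then for every n-vertex graph G ∈ 𝓕 and every pair of weightings w_1, w_2 : V(G) → ℝ≥0 there exists a set X ⊆ V(G) with |X| ≤ 2·f(n) and a partition of V(G) ∖ X into three (possibly empty) sets T_1, T_2, T_3 such that no edge of G joins two distinct sets T_i, T_j, and for each i ∈ {1,2,3} both w_1(T_i) ≤ (2/3)·w_1(V(G)) and w_2(T_i) ≤ (2/3)·w_2(V(G)). -/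
/-! Take a `w₁`-balanced separation `(A, B)` of `G`. As `A \ B` and `B \ A` are disjoint, one of
them, say `B \ A`, carries at most `2/3` of the `w₂`-weight. The subgraph induced on `A \ B` lies
in the family, so it has a `w₂`-balanced separation `(A', B')` with separator of size at most
`f n`. Then `X = (A ∩ B) ∪ (A' ∩ B')` and the parts `A' \ B'`, `B' \ A'`, `B \ A` work: the first
two lie inside `A \ B`, hence are light for `w₁`, and are light for `w₂` relative to `A \ B`. -/

/-- An `H`-model in `G`: a family of pairwise disjoint nonempty vertex subsets of `G`,
each inducing a connected subgraph of `G`, such that for every edge `uv` of `H` there is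
an edge of `G` with one endpoint in `X u` and the other in `X v`. -/
def SimpleGraph.HasModel {α β : Type} (G : SimpleGraph α) (H : SimpleGraph β) : Prop :=
  ∃ X : β → Set α,
    (∀ b, (X b).Nonempty) ∧
    (Pairwise fun b b' => Disjoint (X b) (X b')) ∧
    (∀ b, ((G.induce (X b)).Connected)) ∧
    (∀ b b', H.Adj b b' → ∃ x ∈ X b, ∃ y ∈ X b', G.Adj x y)

/-- `(A, B)` is a separation of `G`: `A ∪ B` is the whole vertex set and no edge of `G`
joins `A \ B` to `B \ A`. -/
def SimpleGraph.IsSeparation {α : Type} (G : SimpleGraph α) (A B : Set α) : Prop :=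
  A ∪ B = Set.univ ∧ ∀ x y : α, G.Adj x y → x ∈ A \ B → y ∈ B \ A → False

theorem pairwise_vecCons_three {γ : Type*} {r : γ → γ → Prop} (hr : ∀ x y, r x y → r y x)
    {a b c : γ} (hab : r a b) (hac : r a c) (hbc : r b c) :
    Pairwise fun i j => r (![a, b, c] i) (![a, b, c] j) := by
  intro i j hij
  fin_cases i <;> fin_cases j <;>
    first | exact absurd rfl hij | simp [*, hr _ _ hab, hr _ _ hac, hr _ _ hbc]

section Weight

variable {α : Type*} [Finite α] {w : α → ℝ}

theorem finsum_mem_le_finsum_mem_of_subset (hw : ∀ x, 0 ≤ w x) {s t : Set α} (hst : s ⊆ t) :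
    ∑ᶠ x ∈ s, w x ≤ ∑ᶠ x ∈ t, w x := by
  rw [finsum_mem_eq_finite_toFinset_sum _ s.toFinite,
    finsum_mem_eq_finite_toFinset_sum _ t.toFinite]
  exact Finset.sum_le_sum_of_subset_of_nonneg (by simpa using hst) fun x _ _ => hw x

theorem finsum_mem_le_finsum (hw : ∀ x, 0 ≤ w x) (s : Set α) :
    ∑ᶠ x ∈ s, w x ≤ ∑ᶠ x, w x := by
  simpa only [finsum_mem_univ] using finsum_mem_le_finsum_mem_of_subset hw (Set.subset_univ s)

theorem finsum_mem_le_or_finsum_mem_le (hw : ∀ x, 0 ≤ w x) {s t : Set α} (hst : Disjoint s t) :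
    ∑ᶠ x ∈ s, w x ≤ (2 / 3) * ∑ᶠ x, w x ∨ ∑ᶠ x ∈ t, w x ≤ (2 / 3) * ∑ᶠ x, w x := by
  have hsum : ∑ᶠ x ∈ s, w x + ∑ᶠ x ∈ t, w x ≤ ∑ᶠ x, w x := by
    rw [← finsum_mem_union hst s.toFinite t.toFinite]
    exact finsum_mem_le_finsum hw _
  have hW : 0 ≤ ∑ᶠ x, w x := finsum_nonneg hw
  by_contra! h
  linarith [h.1, h.2]

end Weight

namespace SimpleGraph

variable {α β : Type}

/-- `(A, B)` is a separation of the subgraph of `G` induced on `C`. -/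
def IsSeparationOn (G : SimpleGraph α) (C A B : Set α) : Prop :=
  A ∪ B = C ∧ ∀ x y : α, G.Adj x y → x ∈ A \ B → y ∈ B \ A → False

theorem IsSeparation.symm {G : SimpleGraph α} {A B : Set α} (h : G.IsSeparation A B) :
    G.IsSeparation B A :=
  ⟨Set.union_comm A B ▸ h.1, fun x y hxy hx hy => h.2 y x hxy.symm hy hx⟩

theorem IsSeparationOn.subset_left {G : SimpleGraph α} {C A B : Set α}
    (h : G.IsSeparationOn C A B) : A ⊆ C :=
  h.1 ▸ Set.subset_union_left

theorem IsSeparationOn.subset_right {G : SimpleGraph α} {C A B : Set α}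
    (h : G.IsSeparationOn C A B) : B ⊆ C :=
  h.1 ▸ Set.subset_union_right

theorem IsSeparation.isSeparationOn_image {G : SimpleGraph α} (e : β ↪ α) {A B : Set β}
    (h : (G.comap e).IsSeparation A B) :
    G.IsSeparationOn (Set.range e) (e '' A) (e '' B) := by
  refine ⟨by rw [← Set.image_union, h.1, Set.image_univ], ?_⟩
  rintro _ _ hxy hx hy
  rw [← Set.image_sdiff e.injective] at hx hy
  obtain ⟨a, ha, rfl⟩ := hx
  obtain ⟨b, hb, rfl⟩ := hy
  exact h.2 a b hxy ha hb

section Refine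

variable {G : SimpleGraph α} {A B A' B' : Set α}

theorem IsSeparation.iUnion_refine (hAB : G.IsSeparation A B)
    (h' : G.IsSeparationOn (A \ B) A' B') :
    ⋃ i, ![A' \ B', B' \ A', B \ A] i = Set.univ \ (A ∩ B ∪ A' ∩ B') := by
  ext x
  have hx' : x ∈ A' ∨ x ∈ B' ↔ x ∈ A ∧ x ∉ B := Set.ext_iff.1 h'.1 x
  have hx : x ∈ A ∨ x ∈ B := (Set.ext_iff.1 hAB.1 x).2 trivial
  simp only [Set.mem_iUnion, Fin.exists_fin_succ, Matrix.cons_val_zero, Matrix.cons_val_succ,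
    Matrix.cons_val_fin_one, exists_const, Set.mem_sdiff, Set.mem_univ, Set.mem_union,
    Set.mem_inter_iff]
  tauto

theorem IsSeparationOn.pairwise_disjoint_refine (h' : G.IsSeparationOn (A \ B) A' B') :
    Pairwise fun i j => Disjoint (![A' \ B', B' \ A', B \ A] i) (![A' \ B', B' \ A', B \ A] j) :=
  pairwise_vecCons_three (fun _ _ h => h.symm) disjoint_sdiff_sdiff
    (disjoint_sdiff_sdiff.mono_left (Set.sdiff_subset.trans h'.subset_left))
    (disjoint_sdiff_sdiff.mono_left (Set.sdiff_subset.trans h'.subset_right))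

theorem IsSeparation.pairwise_not_adj_refine (hAB : G.IsSeparation A B)
    (h' : G.IsSeparationOn (A \ B) A' B') :
    Pairwise fun i j => ∀ x ∈ ![A' \ B', B' \ A', B \ A] i,
      ∀ y ∈ ![A' \ B', B' \ A', B \ A] j, ¬ G.Adj x y :=
  pairwise_vecCons_three (r := fun s t => ∀ x ∈ s, ∀ y ∈ t, ¬ G.Adj x y)
    (fun _ _ h y hy x hx hxy => h x hx y hy hxy.symm)
    (fun x hx y hy hxy => h'.2 x y hxy hx hy)
    (fun x hx y hy hxy => hAB.2 x y hxy (h'.subset_left hx.1) hy)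
    (fun x hx y hy hxy => hAB.2 x y hxy (h'.subset_right hx.1) hy)

end Refine

end SimpleGraph

theorem exists_isSeparationOn_of_hereditary {f : ℕ → ℝ}
    {P : ∀ {m : ℕ}, SimpleGraph (Fin m) → Prop}
    (hclosed : ∀ {m m' : ℕ} (G : SimpleGraph (Fin m)) (G' : SimpleGraph (Fin m')),
      P G → (∃ e : Fin m' ↪ Fin m, ∀ a b, G'.Adj a b → G.Adj (e a) (e b)) → P G')
    (hsep : ∀ {m : ℕ} (G : SimpleGraph (Fin m)), P G →
      ∀ w : Fin m → ℝ, (∀ x, 0 ≤ w x) →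
        ∃ A B : Set (Fin m), G.IsSeparation A B ∧
          ((A ∩ B).ncard : ℝ) ≤ f m ∧
          (∑ᶠ x ∈ A \ B, w x) ≤ (2 / 3) * ∑ᶠ x, w x ∧
          (∑ᶠ x ∈ B \ A, w x) ≤ (2 / 3) * ∑ᶠ x, w x)
    {n : ℕ} {G : SimpleGraph (Fin n)} (hG : P G) (C : Set (Fin n))
    {w : Fin n → ℝ} (hw : ∀ x, 0 ≤ w x) :
    ∃ A B : Set (Fin n), G.IsSeparationOn C A B ∧
      ((A ∩ B).ncard : ℝ) ≤ f C.ncard ∧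
      (∑ᶠ x ∈ A \ B, w x) ≤ (2 / 3) * ∑ᶠ x ∈ C, w x ∧
      (∑ᶠ x ∈ B \ A, w x) ≤ (2 / 3) * ∑ᶠ x ∈ C, w x := by
  obtain ⟨m, e, rfl⟩ := C.toFinite.fin_embedding
  rw [Set.ncard_range_of_injective e.injective, Nat.card_fin]
  obtain ⟨A, B, hAB, hcard, hA, hB⟩ :=
    hsep (G.comap e) (hclosed G _ hG ⟨e, fun _ _ h => h⟩) (w ∘ e) fun _ => hw _
  have hweight : ∀ s, ∑ᶠ x ∈ e '' s, w x ≤ (2 / 3) * ∑ᶠ x ∈ Set.range e, w x ↔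
      ∑ᶠ x ∈ s, (w ∘ e) x ≤ (2 / 3) * ∑ᶠ x, (w ∘ e) x := fun s => by
    rw [finsum_mem_image e.injective.injOn, finsum_mem_range e.injective]; rfl
  refine ⟨e '' A, e '' B, hAB.isSeparationOn_image e, ?_, ?_, ?_⟩
  · rwa [← Set.image_inter e.injective, Set.ncard_image_of_injective _ e.injective]
  · rwa [← Set.image_sdiff e.injective, hweight]
  · rwa [← Set.image_sdiff e.injective, hweight]

theorem stmt8_general (f : ℕ → ℝ) (hfmono : Monotone f)
    (P : ∀ {m : ℕ}, SimpleGraph (Fin m) → Prop)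
    (hclosed : ∀ {m m' : ℕ} (G : SimpleGraph (Fin m)) (G' : SimpleGraph (Fin m')),
      P G → (∃ e : Fin m' ↪ Fin m, ∀ a b, G'.Adj a b → G.Adj (e a) (e b)) → P G')
    (hsep : ∀ {m : ℕ} (G : SimpleGraph (Fin m)), P G →
      ∀ w : Fin m → ℝ, (∀ x, 0 ≤ w x) →
        ∃ A B : Set (Fin m), G.IsSeparation A B ∧
          ((A ∩ B).ncard : ℝ) ≤ f m ∧
          (∑ᶠ x ∈ A \ B, w x) ≤ (2 / 3) * ∑ᶠ x, w x ∧
          (∑ᶠ x ∈ B \ A, w x) ≤ (2 / 3) * ∑ᶠ x, w x)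
    (n : ℕ) (G : SimpleGraph (Fin n)) (hG : P G)
    (w₁ w₂ : Fin n → ℝ) (hw₁ : ∀ x, 0 ≤ w₁ x) (hw₂ : ∀ x, 0 ≤ w₂ x) :
    ∃ (X : Set (Fin n)) (T : Fin 3 → Set (Fin n)),
      ((X.ncard : ℝ) ≤ 2 * f n) ∧
      (⋃ i, T i) = Set.univ \ X ∧
      (Pairwise fun i j => Disjoint (T i) (T j)) ∧
      (∀ i j : Fin 3, i ≠ j → ∀ x ∈ T i, ∀ y ∈ T j, ¬ G.Adj x y) ∧
      (∀ i, (∑ᶠ x ∈ T i, w₁ x) ≤ (2 / 3) * ∑ᶠ x, w₁ x) ∧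
      (∀ i, (∑ᶠ x ∈ T i, w₂ x) ≤ (2 / 3) * ∑ᶠ x, w₂ x) := by
  obtain ⟨A, B, hAB, hcard, hA₁, hB₁, hB₂⟩ : ∃ A B : Set (Fin n), G.IsSeparation A B ∧
      ((A ∩ B).ncard : ℝ) ≤ f n ∧ (∑ᶠ x ∈ A \ B, w₁ x) ≤ (2 / 3) * ∑ᶠ x, w₁ x ∧
      (∑ᶠ x ∈ B \ A, w₁ x) ≤ (2 / 3) * ∑ᶠ x, w₁ x ∧
      (∑ᶠ x ∈ B \ A, w₂ x) ≤ (2 / 3) * ∑ᶠ x, w₂ x := by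
    obtain ⟨A, B, hAB, hcard, hA₁, hB₁⟩ := hsep G hG w₁ hw₁
    rcases finsum_mem_le_or_finsum_mem_le hw₂ (disjoint_sdiff_sdiff (x := A) (y := B))
      with hA₂ | hB₂
    · exact ⟨B, A, hAB.symm, Set.inter_comm A B ▸ hcard, hB₁, hA₁, hA₂⟩
    · exact ⟨A, B, hAB, hcard, hA₁, hB₁, hB₂⟩
  obtain ⟨A', B', hA'B', hcard', hA'₂, hB'₂⟩ :=
    exists_isSeparationOn_of_hereditary hclosed hsep hG (A \ B) hw₂
  have hC₁ {s} (hs : s ⊆ A \ B) := (finsum_mem_le_finsum_mem_of_subset hw₁ hs).trans hA₁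
  have hC₂ := mul_le_mul_of_nonneg_left (finsum_mem_le_finsum hw₂ (A \ B))
    (by norm_num : (0 : ℝ) ≤ 2 / 3)
  refine ⟨A ∩ B ∪ A' ∩ B', ![A' \ B', B' \ A', B \ A], ?_, hAB.iUnion_refine hA'B',
    hA'B'.pairwise_disjoint_refine, hAB.pairwise_not_adj_refine hA'B', ?_, ?_⟩
  · calc ((A ∩ B ∪ A' ∩ B').ncard : ℝ) ≤ (A ∩ B).ncard + (A' ∩ B').ncard := by
          exact_mod_cast Set.ncard_union_le _ _
      _ ≤ f n + f n := by
          gcongr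
          exact hcard'.trans (hfmono ((Set.ncard_le_card _).trans_eq (Nat.card_fin n)))
      _ = 2 * f n := by ring
  · simp only [Fin.forall_fin_succ]
    exact ⟨hC₁ (Set.sdiff_subset.trans hA'B'.subset_left),
      hC₁ (Set.sdiff_subset.trans hA'B'.subset_right), hB₁, nofun⟩
  · simp only [Fin.forall_fin_succ]
    exact ⟨hA'₂.trans hC₂, hB'₂.trans hC₂, hB₂, nofun⟩

/-- Let `f : ℕ → ℝ≥0` be nondecreasing and let `𝓕` (here the predicate `P`)
be a family of finite graphs closed under subgraphs such that every `m`-vertex member,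
under every nonnegative vertex weighting, has a separation with separator of size at most
`f m` and each side of weight at most `2/3` of the total.  Then every `n`-vertex `G ∈ 𝓕`,
with any two nonnegative weightings `w₁, w₂`, admits a set `X` of at most `2·f n` vertices
and a partition of `V(G) \ X` into three (possibly empty) sets `T 0, T 1, T 2` with no edge
of `G` joining two distinct sets, and with `w₁(T i) ≤ (2/3)·w₁(V)` and
`w₂(T i) ≤ (2/3)·w₂(V)` for each `i`. -/
theorem stmt8 (f : ℕ → ℝ) (hf0 : ∀ m, 0 ≤ f m) (hfmono : Monotone f)
    (P : ∀ {m : ℕ}, SimpleGraph (Fin m) → Prop)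
    (hclosed : ∀ {m m' : ℕ} (G : SimpleGraph (Fin m)) (G' : SimpleGraph (Fin m')),
      P G → (∃ e : Fin m' ↪ Fin m, ∀ a b, G'.Adj a b → G.Adj (e a) (e b)) → P G')
    (hsep : ∀ {m : ℕ} (G : SimpleGraph (Fin m)), P G →
      ∀ w : Fin m → ℝ, (∀ x, 0 ≤ w x) →
        ∃ A B : Set (Fin m), G.IsSeparation A B ∧
          ((A ∩ B).ncard : ℝ) ≤ f m ∧
          (∑ᶠ x ∈ A \ B, w x) ≤ (2 / 3) * ∑ᶠ x, w x ∧
          (∑ᶠ x ∈ B \ A, w x) ≤ (2 / 3) * ∑ᶠ x, w x)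
    (n : ℕ) (G : SimpleGraph (Fin n)) (hG : P G)
    (w₁ w₂ : Fin n → ℝ) (hw₁ : ∀ x, 0 ≤ w₁ x) (hw₂ : ∀ x, 0 ≤ w₂ x) :
    ∃ (X : Set (Fin n)) (T : Fin 3 → Set (Fin n)),
      ((X.ncard : ℝ) ≤ 2 * f n) ∧
      (⋃ i, T i) = Set.univ \ X ∧
      (Pairwise fun i j => Disjoint (T i) (T j)) ∧
      (∀ i j : Fin 3, i ≠ j → ∀ x ∈ T i, ∀ y ∈ T j, ¬ G.Adj x y) ∧
      (∀ i, (∑ᶠ x ∈ T i, w₁ x) ≤ (2 / 3) * ∑ᶠ x, w₁ x) ∧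
      (∀ i, (∑ᶠ x ∈ T i, w₂ x) ≤ (2 / 3) * ∑ᶠ x, w₂ x) :=
  stmt8_general f hfmono P hclosed hsep n G hG w₁ w₂ hw₁ hw₂
end
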